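/- Let ν be a symmetric distance matrix norm, X a metric space, and let (x₀, …, x_n) ∈ X^{n+1} and (y₀, …, y_m) ∈ X^{m+1} be two tuples with the same underlying set: {x₀, …, x_n} = {y₀, …, y_m} as subsets of X. Then w_ν(x₀, …, x_n) = w_ν(y₀, …, y_m); that is, for a symmetric distance matrix norm the ν-weight of a tuple depends only on the set of its entries. -/
import Mathlib


noncomputable section

open scoped BigOperators

/-- `D` is a distance matrix (a pseudometric on `Fin (n+1)`). -/
def IsDistMatrix {n : ℕ} (D : Fin (n + 1) → Fin (n + 1) → ℝ) : Prop :=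
  (∀ i, D i i = 0) ∧ (∀ i j, 0 ≤ D i j) ∧ (∀ i j, D i j = D j i) ∧
    ∀ i j k, D i k ≤ D i j + D j k

/-- The matrix `E_n` with all off-diagonal entries equal to `1`. -/
def matE (n : ℕ) : Fin (n + 1) → Fin (n + 1) → ℝ := fun i j => if i = j then 0 else 1

/-- A distance matrix norm: a family of maps `ν n : Dist_[n] → ℝ` satisfying
nonnegativity, (1) homogeneity, (2) subadditivity, (3) monotonicity, (4) normalization
and (5) simpliciality (faces decrease, degeneracies preserve).  Faces are given by
precomposition with `Fin.succAbove i` (the monotone injection skipping `i`) and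
degeneracies by precomposition with `Fin.predAbove i` (the monotone surjection taking
the value `i` twice). -/
structure IsDistMatrixNorm (ν : ∀ n : ℕ, (Fin (n + 1) → Fin (n + 1) → ℝ) → ℝ) : Prop where
  nonneg : ∀ (n : ℕ) (D : Fin (n + 1) → Fin (n + 1) → ℝ), IsDistMatrix D → 0 ≤ ν n D
  smul_eq : ∀ (n : ℕ) (α : ℝ), 0 ≤ α → ∀ D : Fin (n + 1) → Fin (n + 1) → ℝ, IsDistMatrix D →
    ν n (fun i j => α * D i j) = α * ν n D
  add_le : ∀ (n : ℕ) (D D' : Fin (n + 1) → Fin (n + 1) → ℝ), IsDistMatrix D → IsDistMatrix D' →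
    ν n (fun i j => D i j + D' i j) ≤ ν n D + ν n D'
  mono : ∀ (n : ℕ) (D D' : Fin (n + 1) → Fin (n + 1) → ℝ), IsDistMatrix D → IsDistMatrix D' →
    (∀ i j, D i j ≤ D' i j) → ν n D ≤ ν n D'
  normalized : ν 1 (matE 1) = 1
  face_le : ∀ (n : ℕ) (D : Fin (n + 2) → Fin (n + 2) → ℝ), IsDistMatrix D → ∀ i : Fin (n + 2),
    ν n (fun k l => D (i.succAbove k) (i.succAbove l)) ≤ ν (n + 1) D
  degen_eq : ∀ (n : ℕ) (D : Fin (n + 1) → Fin (n + 1) → ℝ), IsDistMatrix D → ∀ i : Fin (n + 1),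
    ν (n + 1) (fun k l => D (i.predAbove k) (i.predAbove l)) = ν n D

/-- The constants `C_n(ν) = ν(E_n)`. -/
def matC (ν : ∀ n : ℕ, (Fin (n + 1) → Fin (n + 1) → ℝ) → ℝ) (n : ℕ) : ℝ :=
  ν n (matE n)

/-- The `ν`-weight of a tuple of points in a (pseudo)metric space. -/
def wt (ν : ∀ n : ℕ, (Fin (n + 1) → Fin (n + 1) → ℝ) → ℝ) {X : Type*} [PseudoMetricSpace X]
    {n : ℕ} (x : Fin (n + 1) → X) : ℝ :=
  ν n fun i j => dist (x i) (x j)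

lemma isDistMatrix_dist {X : Type*} [PseudoMetricSpace X] {n : ℕ} (x : Fin (n + 1) → X) :
    IsDistMatrix (fun i j => dist (x i) (x j)) :=
  ⟨fun _ => dist_self _, fun _ _ => dist_nonneg, fun _ _ => dist_comm _ _,
   fun _ _ _ => dist_triangle _ _ _⟩

section Aux

variable {ν : ∀ n : ℕ, (Fin (n + 1) → (Fin (n + 1)) → ℝ) → ℝ}
variable {X : Type*} [PseudoMetricSpace X]

include ν

def SymHyp (ν : ∀ n : ℕ, (Fin (n + 1) → (Fin (n + 1)) → ℝ) → ℝ) : Prop :=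
  ∀ (n : ℕ) (D : Fin (n + 1) → Fin (n + 1) → ℝ), IsDistMatrix D →
      ∀ π : Equiv.Perm (Fin (n + 1)), ν n (fun i j => D (π i) (π j)) = ν n D

lemma wt_comp_perm (hsym : SymHyp ν) {n : ℕ} (x : Fin (n + 1) → X)
    (π : Equiv.Perm (Fin (n + 1))) :
    wt ν (x ∘ π) = wt ν x :=
  hsym n _ (isDistMatrix_dist x) π

lemma wt_comp_predAbove (hν : IsDistMatrixNorm ν) {n : ℕ} (x : Fin (n + 1) → X)
    (i : Fin (n + 1)) :
    wt ν (x ∘ i.predAbove) = wt ν x :=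
  hν.degen_eq n _ (isDistMatrix_dist x) i

lemma wt_dedup (hν : IsDistMatrixNorm ν) (hsym : SymHyp ν) {n : ℕ} (x : Fin (n + 2) → X) (k l : Fin (n + 2)) (hkl : k ≠ l)
    (hx : x k = x l) :
    ∃ z : Fin (n + 1) → X, Set.range z = Set.range x ∧ wt ν z = wt ν x := by
  -- build a permutation sending 0 ↦ k, 1 ↦ l
  set σ := Equiv.swap (0 : Fin (n + 2)) k with hσ
  have hσl : σ.symm l ≠ 0 := by
    intro hc
    apply hkl
    have := congrArg σ hc
    rw [Equiv.apply_symm_apply] at this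
    simpa [hσ] using this.symm
  set τ := Equiv.swap (1 : Fin (n + 2)) (σ.symm l) with hτ
  set ρ : Equiv.Perm (Fin (n + 2)) := τ.trans σ with hρ
  have hρ0 : ρ 0 = k := by
    have hτ0 : τ 0 = 0 := by
      rw [hτ, Equiv.swap_apply_of_ne_of_ne]
      · exact zero_ne_one
      · exact fun hc => hσl hc.symm
    simp [hρ, Equiv.trans_apply, hτ0, hσ]
  have hρ1 : ρ 1 = l := by
    have hτ1 : τ 1 = σ.symm l := Equiv.swap_apply_left _ _
    simp [hρ, Equiv.trans_apply, hτ1]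
  set x₁ : Fin (n + 2) → X := x ∘ ρ with hx₁
  have hx01 : x₁ 0 = x₁ 1 := by simp [hx₁, hρ0, hρ1, hx]
  set z : Fin (n + 1) → X := fun i => x₁ i.succ with hz
  have hcomp : x₁ = z ∘ (Fin.predAbove (0 : Fin (n + 1))) := by
    funext j
    rcases eq_or_ne j 0 with rfl | hj
    · show x₁ 0 = z (Fin.predAbove 0 0)
      have : Fin.predAbove (0 : Fin (n + 1)) 0 = 0 := rfl
      rw [this, hz]
      simpa using hx01
    · show x₁ j = z (Fin.predAbove 0 j)
      have h0j : (0 : Fin (n + 1)).castSucc < j := by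
        simpa using (Fin.pos_of_ne_zero hj)
      rw [Fin.predAbove_of_castSucc_lt _ _ h0j, hz]
      simp [Fin.succ_pred]
  refine ⟨z, ?_, ?_⟩
  · have h1 : Set.range x₁ = Set.range x := by
      rw [hx₁, Set.range_comp, Equiv.range_eq_univ, Set.image_univ]
    rw [← h1]
    apply le_antisymm
    · rintro _ ⟨i, rfl⟩; exact ⟨i.succ, rfl⟩
    · rintro _ ⟨j, rfl⟩
      rcases eq_or_ne j 0 with rfl | hj
      · exact ⟨0, by simpa [hz] using hx01.symm⟩
      · exact ⟨(j.pred hj), by simp [hz, Fin.succ_pred]⟩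
  · have h2 : wt ν x₁ = wt ν x := wt_comp_perm hsym x ρ
    have h3 : wt ν (z ∘ (Fin.predAbove (0 : Fin (n + 1)))) = wt ν z :=
      wt_comp_predAbove hν z 0
    rw [← h2, hcomp, h3]

lemma exists_inj_wt (hν : IsDistMatrixNorm ν) (hsym : SymHyp ν) :
    ∀ (n : ℕ) (x : Fin (n + 1) → X), ∃ (k : ℕ) (z : Fin (k + 1) → X),
      Function.Injective z ∧ Set.range z = Set.range x ∧ wt ν z = wt ν x := by
  intro n
  induction n with
  | zero =>
    intro x
    exact ⟨0, x, fun a b _ => by omega, rfl, rfl⟩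
  | succ n ih =>
    intro x
    by_cases hx : Function.Injective x
    · exact ⟨n + 1, x, hx, rfl, rfl⟩
    · rw [Function.not_injective_iff] at hx
      obtain ⟨k, l, hxkl, hkl⟩ := hx
      obtain ⟨z, hz1, hz2⟩ := wt_dedup hν hsym x k l hkl hxkl
      obtain ⟨k', z', h1, h2, h3⟩ := ih z
      exact ⟨k', z', h1, hz1 ▸ h2, hz2 ▸ h3⟩

lemma wt_eq_of_inj (hsym : SymHyp ν) {n m : ℕ} (x : Fin (n + 1) → X) (y : Fin (m + 1) → X)
    (hx : Function.Injective x) (hy : Function.Injective y)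
    (h : Set.range x = Set.range y) : wt ν x = wt ν y := by
  let e : Fin (n + 1) ≃ Fin (m + 1) :=
    (Equiv.ofInjective x hx).trans ((Equiv.setCongr h).trans (Equiv.ofInjective y hy).symm)
  have hnm : n = m := by
    have := Fintype.card_congr e
    simpa using this
  subst hnm
  have hye : ∀ i, y (e i) = x i := by
    intro i
    show y ((Equiv.ofInjective y hy).symm
      ((Equiv.setCongr h) ((Equiv.ofInjective x hx) i))) = x i
    have h1 := (Equiv.ofInjective y hy).apply_symm_apply
      ((Equiv.setCongr h) ((Equiv.ofInjective x hx) i))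
    have h2 := congrArg Subtype.val h1
    simpa [Equiv.ofInjective] using h2
  have hcomp : y ∘ e = x := funext hye
  rw [← hcomp, wt_comp_perm hsym y e]

end Aux

/-- For a symmetric distance matrix norm, the `ν`-weight of a tuple depends only on the
set of its entries. -/
theorem wt_eq_of_range_eq (ν : ∀ n : ℕ, (Fin (n + 1) → Fin (n + 1) → ℝ) → ℝ)
    (hν : IsDistMatrixNorm ν)
    (hsym : ∀ (n : ℕ) (D : Fin (n + 1) → Fin (n + 1) → ℝ), IsDistMatrix D →
      ∀ π : Equiv.Perm (Fin (n + 1)), ν n (fun i j => D (π i) (π j)) = ν n D)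
    {X : Type*} [MetricSpace X] (n m : ℕ) (x : Fin (n + 1) → X) (y : Fin (m + 1) → X)
    (h : Set.range x = Set.range y) :
    wt ν x = wt ν y := by
  obtain ⟨k, z, hz1, hz2, hz3⟩ := exists_inj_wt hν hsym n x
  obtain ⟨k', z', hz1', hz2', hz3'⟩ := exists_inj_wt hν hsym m y
  rw [← hz3, ← hz3']
  exact wt_eq_of_inj hsym z z' hz1 hz1' (by rw [hz2, hz2', h])
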